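/- The profile tree T of an n-state NBW A on an infinite word w is a binary tree of width at most n: every class of T other than the level-0 class has exactly one parent, every class has at most two children, all classes descend from the single level-0 class, and every level of T contains at most n classes. -/

import Mathlib

/-!
Profile trees for Büchi determinization (Fisman–Kupferman–Vardi–Wilke style profiles).
Common definitions: nondeterministic Büchi word automata (NBW), the run DAG `G`,
profiles of nodes, and the pruned run DAG `G'`.
-/

/-- A nondeterministic Büchi word automaton `A = (Alph, Q, Qin, ρ, F)` with `Qin ∩ F = ∅`. -/
structure NBW (Alph Q : Type*) where
  Qin : Set Q
  ρ : Q → Alph → Set Q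
  F : Set Q
  disj : Qin ∩ F = ∅

variable {Alph Q : Type*} (A : NBW Alph Q) (w : ℕ → Alph)

/-- Lexicographic order `L₁ ≤ L₂` on profiles (lists over ℕ). -/
def lexLE (L₁ L₂ : List ℕ) : Prop :=
  List.Lex (· < ·) L₁ L₂ ∨ L₁ = L₂

/-- Strict lexicographic order `L₁ < L₂` on profiles. -/
def lexLT (L₁ L₂ : List ℕ) : Prop :=
  List.Lex (· < ·) L₁ L₂

open Classical in
/-- The profiles of all finite initial runs of `A` (on `w`) to the node `v = (q, i)`:
for each run `p₀,…,p_i` with `p₀ ∈ Qin`, `p_{j+1} ∈ ρ(p_j, w_j)` and `p_i = q`, the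
sequence of `F`-visitation labels `f(p₀,0) ⋯ f(p_i,i)` (where `f` is 1 on `F`-nodes, else 0). -/
def runProfiles (v : Q × ℕ) : Set (List ℕ) :=
  { L | ∃ p : ℕ → Q, p 0 ∈ A.Qin ∧ (∀ j < v.2, p (j + 1) ∈ A.ρ (p j) (w j)) ∧
        p v.2 = v.1 ∧ L = (List.range (v.2 + 1)).map (fun j => if p j ∈ A.F then 1 else 0) }

/-- `v` is a node of the run DAG `G = (V, E)` (equivalently of the pruned DAG `G'`):
there is a finite run of `A` to `v.1` on `w₀ ⋯ w_{v.2 - 1}`. -/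
def memV (v : Q × ℕ) : Prop := (runProfiles A w v).Nonempty

/-- `L` is the lexicographically maximal profile among all initial paths to `v`. -/
def IsMaxProfile (v : Q × ℕ) (L : List ℕ) : Prop :=
  L ∈ runProfiles A w v ∧ ∀ L' ∈ runProfiles A w v, lexLE L' L

open Classical in
/-- The profile `h_v` of a node `v`: the lexicographically maximal profile of an
initial path to `v` (junk value `[]` if `v` is not a node of the DAG). -/
noncomputable def profile (v : Q × ℕ) : List ℕ :=
  if h : ∃ L, IsMaxProfile A w v L then h.choose else []

/-- The edge relation `E` of the run DAG `G`: `E((q,i), (q',i+1))` iff `(q,i) ∈ V`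
and `q' ∈ ρ(q, w_i)`. -/
def edgeG (u v : Q × ℕ) : Prop :=
  memV A w u ∧ v.2 = u.2 + 1 ∧ v.1 ∈ A.ρ u.1 (w u.2)

/-- The edge relation `E'` of the pruned run DAG `G'`: `(u,v) ∈ E` and every
`E`-parent `u'` of `v` satisfies `h_{u'} ≤ h_u`. -/
def edgeG' (u v : Q × ℕ) : Prop :=
  edgeG A w u v ∧ ∀ u', edgeG A w u' v → lexLE (profile A w u') (profile A w u)

/-- The equivalence class (under equality of profiles, levelwise) of a node `u` of `G'`. -/
def classOf (u : Q × ℕ) : Set (Q × ℕ) :=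
  { v | memV A w v ∧ v.2 = u.2 ∧ profile A w v = profile A w u }

/-- `C` is a class (node) of the profile tree `T` on level `i`. -/
def ClassAt (C : Set (Q × ℕ)) (i : ℕ) : Prop :=
  ∃ u, memV A w u ∧ u.2 = i ∧ C = classOf A w u

/-- The child relation of the profile tree `T`: `[v]` is a child of `[u]`
whenever `(u, v) ∈ E'`. -/
def childC (C D : Set (Q × ℕ)) : Prop :=
  ∃ u v, edgeG' A w u v ∧ memV A w v ∧ C = classOf A w u ∧ D = classOf A w v

/-- `D` is a descendant of `C` in `T`: there is a (possibly empty) path from `C` to `D`. -/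
def DescC : Set (Q × ℕ) → Set (Q × ℕ) → Prop := Relation.ReflTransGen (childC A w)

/-- `C` is an `F`-class: all its members are `F`-nodes. -/
def IsFClass (C : Set (Q × ℕ)) : Prop := ∀ v ∈ C, v.1 ∈ A.F

/-- `h_C ≤ h_D` for classes `C`, `D` (members of a class all share one profile). -/
def profLE (C D : Set (Q × ℕ)) : Prop :=
  ∀ u ∈ C, ∀ v ∈ D, lexLE (profile A w u) (profile A w v)

/-- `h_C < h_D` for classes `C`, `D`. -/
def profLT (C D : Set (Q × ℕ)) : Prop :=
  ∀ u ∈ C, ∀ v ∈ D, lexLT (profile A w u) (profile A w v)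

/-!
For a `G'`-edge `(u, v)` the profile of `v` is the profile of `u` followed by `f(v)`: a maximal
initial path to `v` enters it from some `G`-parent, whose profile is at most that of `u`, and for
lists of equal length appending a letter preserves the lexicographic order. So the class of a
node determines the class of its `G'`-parent (drop the last letter), and the children of a class
are determined by the value of `f`, which is `0` or `1`. Since `Qin ∩ F = ∅`, all level-`0`
profiles are `[0]`; every node on a later level has a `G'`-parent (a `G`-parent of maximal
profile), so every class descends from the level-`0` class. Each state gives at most one class
per level.
-/

theorem List.Lex.append_of_length_eq {α : Type*} {r : α → α → Prop} {l₁ l₂ : List α}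
    (h : List.Lex r l₁ l₂) (hlen : l₁.length = l₂.length) (s t : List α) :
    List.Lex r (l₁ ++ s) (l₂ ++ t) := by
  induction h with
  | nil => simp at hlen
  | cons _ ih => exact .cons (ih (by simpa using hlen))
  | rel h => exact .rel h

theorem List.append_le_append_of_length_eq {α : Type*} [LinearOrder α] {l₁ l₂ : List α}
    (hlen : l₁.length = l₂.length) (h : l₁ ≤ l₂) (s : List α) :
    l₁ ++ s ≤ l₂ ++ s := by
  rcases h.lt_or_eq with h | rfl
  · have : l₁ ++ s < l₂ ++ s := List.Lex.append_of_length_eq h hlen s s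
    exact this.le
  · exact le_rfl

theorem lexLE_iff_le {L₁ L₂ : List ℕ} : lexLE L₁ L₂ ↔ L₁ ≤ L₂ := by
  rw [le_iff_lt_or_eq]
  rfl

-- The instance matches the one in `runProfiles`, so labels of runs unfold to `fval` by `rfl`.
open Classical in
noncomputable def fval (q : Q) : ℕ := if q ∈ A.F then 1 else 0

section RunDAG

variable {A w}

theorem length_of_mem_runProfiles {v : Q × ℕ} {L : List ℕ} (h : L ∈ runProfiles A w v) :
    L.length = v.2 + 1 := by
  obtain ⟨p, -, -, -, rfl⟩ := h
  simp

variable (A w) in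
theorem runProfiles_finite (v : Q × ℕ) : (runProfiles A w v).Finite := by
  refine ((List.finite_length_eq (Fin 2) (v.2 + 1)).image (List.map Fin.val)).subset ?_
  rintro L ⟨p, -, -, -, rfl⟩
  have hlt (q : Q) : fval A q < 2 := by unfold fval; split_ifs <;> omega
  exact ⟨(List.range (v.2 + 1)).map fun j => ⟨fval A (p j), hlt (p j)⟩, by simp,
    by simp only [List.map_map]; rfl⟩

theorem isMaxProfile_profile {v : Q × ℕ} (hv : memV A w v) :
    IsMaxProfile A w v (profile A w v) := by
  have hmax : ∃ L, IsMaxProfile A w v L := by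
    obtain ⟨L, hL, hmax⟩ := Set.exists_max_image _ id (runProfiles_finite A w v) hv
    exact ⟨L, hL, fun L' hL' => lexLE_iff_le.2 (hmax L' hL')⟩
  rw [profile, dif_pos hmax]
  exact hmax.choose_spec

theorem profile_mem_runProfiles {v : Q × ℕ} (hv : memV A w v) :
    profile A w v ∈ runProfiles A w v :=
  (isMaxProfile_profile hv).1

theorem le_profile {v : Q × ℕ} (hv : memV A w v) {L : List ℕ} (hL : L ∈ runProfiles A w v) :
    L ≤ profile A w v :=
  lexLE_iff_le.1 ((isMaxProfile_profile hv).2 L hL)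

theorem length_profile {v : Q × ℕ} (hv : memV A w v) : (profile A w v).length = v.2 + 1 :=
  length_of_mem_runProfiles (profile_mem_runProfiles hv)

theorem append_fval_mem_runProfiles {u v : Q × ℕ} (huv : edgeG A w u v) {L : List ℕ}
    (hL : L ∈ runProfiles A w u) : L ++ [fval A v.1] ∈ runProfiles A w v := by
  obtain ⟨-, hv2, hρ⟩ := huv
  obtain ⟨p, hp0, hpstep, hpu, rfl⟩ := hL
  have hp' : ∀ j ≤ u.2, Function.update p (u.2 + 1) v.1 j = p j := fun j hj =>
    Function.update_of_ne (by omega) _ _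
  refine ⟨Function.update p (u.2 + 1) v.1, by rwa [hp' 0 (Nat.zero_le _)], fun j hj => ?_,
    by rw [hv2, Function.update_self], ?_⟩
  · rcases Nat.lt_or_ge j u.2 with hj | hj
    · rw [hp' j hj.le, hp' (j + 1) hj]
      exact hpstep j hj
    · obtain rfl : j = u.2 := by omega
      rw [hp' _ le_rfl, Function.update_self, hpu]
      exact hρ
  · rw [hv2, List.range_succ (n := u.2 + 1), List.map_append]
    congr 1
    · exact List.map_congr_left fun j hj => by rw [hp' j (Nat.lt_succ_iff.1 (List.mem_range.1 hj))]
    · change [fval A v.1] = [fval A (Function.update p (u.2 + 1) v.1 (u.2 + 1))]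
      rw [Function.update_self]

theorem exists_edgeG_of_mem_runProfiles {v : Q × ℕ} {i : ℕ} (hv2 : v.2 = i + 1) {L : List ℕ}
    (hL : L ∈ runProfiles A w v) :
    ∃ u, edgeG A w u v ∧ ∃ M ∈ runProfiles A w u, L = M ++ [fval A v.1] := by
  obtain ⟨p, hp0, hpstep, hpv, rfl⟩ := hL
  rw [hv2] at hpstep hpv
  have hM : (List.range (i + 1)).map (fun j => fval A (p j)) ∈ runProfiles A w (p i, i) :=
    ⟨p, hp0, fun j hj => hpstep j (by omega), rfl, rfl⟩
  refine ⟨(p i, i), ⟨⟨_, hM⟩, hv2, ?_⟩, _, hM, ?_⟩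
  · rw [← hpv]
    exact hpstep i (by omega)
  · rw [hv2, List.range_succ, List.map_append, ← hpv]
    rfl

theorem profile_eq_of_edgeG' {u v : Q × ℕ} (huv : edgeG' A w u v) (hv : memV A w v) :
    profile A w v = profile A w u ++ [fval A v.1] := by
  obtain ⟨hedge, hmax⟩ := huv
  have hu := hedge.1
  refine le_antisymm ?_
    (le_profile hv (append_fval_mem_runProfiles hedge (profile_mem_runProfiles hu)))
  obtain ⟨u', hu'v, M, hM, hL⟩ :=
    exists_edgeG_of_mem_runProfiles hedge.2.1 (profile_mem_runProfiles hv)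
  have hlen : M.length = (profile A w u).length := by
    rw [length_of_mem_runProfiles hM, length_profile hu]
    have := hu'v.2.1
    have := hedge.2.1
    omega
  rw [hL]
  exact List.append_le_append_of_length_eq hlen
    ((le_profile hu'v.1 hM).trans (lexLE_iff_le.1 (hmax u' hu'v))) _

theorem profile_eq_dropLast_of_edgeG' {u v : Q × ℕ} (huv : edgeG' A w u v) (hv : memV A w v) :
    profile A w u = (profile A w v).dropLast := by
  rw [profile_eq_of_edgeG' huv hv, List.dropLast_concat]

theorem exists_edgeG' [Finite Q] {v : Q × ℕ} {i : ℕ} (hv : memV A w v) (hv2 : v.2 = i + 1) :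
    ∃ u, edgeG' A w u v := by
  have hfin : {u | edgeG A w u v}.Finite := by
    refine (Set.finite_range fun q : Q => (q, i)).subset ?_
    rintro ⟨q, j⟩ ⟨-, hj, -⟩
    exact ⟨q, by simp only [Prod.mk.injEq, true_and]; omega⟩
  obtain ⟨u, huv, -⟩ := exists_edgeG_of_mem_runProfiles hv2 (profile_mem_runProfiles hv)
  obtain ⟨u, huv, hmax⟩ := Set.exists_max_image _ (profile A w) hfin ⟨u, huv⟩
  exact ⟨u, huv, fun u' hu' => lexLE_iff_le.2 (hmax u' hu')⟩

theorem profile_of_level_zero {v : Q × ℕ} (hv : memV A w v) (h0 : v.2 = 0) :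
    profile A w v = [0] := by
  obtain ⟨p, hp0, -, -, hL⟩ := profile_mem_runProfiles hv
  have hF : p 0 ∉ A.F := fun hF => (Set.eq_empty_iff_forall_notMem.1 A.disj) (p 0) ⟨hp0, hF⟩
  simp [hL, h0, hF]

end RunDAG

section ProfileTree

variable {A w}

theorem mem_classOf_self {u : Q × ℕ} (hu : memV A w u) : u ∈ classOf A w u :=
  ⟨hu, rfl, rfl⟩

theorem classOf_eq_classOf_iff {u v : Q × ℕ} (hv : memV A w v) :
    classOf A w u = classOf A w v ↔ u.2 = v.2 ∧ profile A w u = profile A w v := by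
  refine ⟨fun h => ?_, fun ⟨h2, hp⟩ => ?_⟩
  · obtain ⟨-, h2, hp⟩ : v ∈ classOf A w u := h ▸ mem_classOf_self hv
    exact ⟨h2.symm, hp.symm⟩
  · ext x
    simp only [classOf, h2, hp]

theorem existsUnique_childC [Finite Q] {D : Set (Q × ℕ)} {i : ℕ} (hD : ClassAt A w D (i + 1)) :
    ∃! C, childC A w C D := by
  obtain ⟨v, hv, hv2, rfl⟩ := hD
  obtain ⟨u, huv⟩ := exists_edgeG' hv hv2
  refine ⟨classOf A w u, ⟨u, v, huv, hv, rfl, rfl⟩, ?_⟩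
  rintro _ ⟨u', v', hu'v', hv', rfl, hvv'⟩
  obtain ⟨hlevel, hprofile⟩ := (classOf_eq_classOf_iff hv').1 hvv'
  refine (classOf_eq_classOf_iff huv.1.1).2 ⟨?_, ?_⟩
  · have := huv.1.2.1
    have := hu'v'.1.2.1
    omega
  · rw [profile_eq_dropLast_of_edgeG' huv hv, profile_eq_dropLast_of_edgeG' hu'v' hv', hprofile]

theorem classOf_eq_of_edgeG' {u v u' v' : Q × ℕ} (huv : edgeG' A w u v)
    (hu'v' : edgeG' A w u' v') (hv : memV A w v) (hv' : memV A w v')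
    (hu : classOf A w u = classOf A w u') (hF : v.1 ∈ A.F ↔ v'.1 ∈ A.F) :
    classOf A w v = classOf A w v' := by
  obtain ⟨hlevel, hprofile⟩ := (classOf_eq_classOf_iff hu'v'.1.1).1 hu
  refine (classOf_eq_classOf_iff hv').2 ⟨?_, ?_⟩
  · rw [huv.1.2.1, hu'v'.1.2.1, hlevel]
  · rw [profile_eq_of_edgeG' huv hv, profile_eq_of_edgeG' hu'v' hv', hprofile]
    classical
    unfold fval
    rw [if_congr hF rfl rfl]

theorem childC_eq_or_eq_or_eq {C D₁ D₂ D₃ : Set (Q × ℕ)} (h₁ : childC A w C D₁)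
    (h₂ : childC A w C D₂) (h₃ : childC A w C D₃) :
    D₁ = D₂ ∨ D₁ = D₃ ∨ D₂ = D₃ := by
  obtain ⟨u₁, v₁, h₁, hv₁, rfl, rfl⟩ := h₁
  obtain ⟨u₂, v₂, h₂, hv₂, hu₂, rfl⟩ := h₂
  obtain ⟨u₃, v₃, h₃, hv₃, hu₃, rfl⟩ := h₃
  have hF : (v₁.1 ∈ A.F ↔ v₂.1 ∈ A.F) ∨ (v₁.1 ∈ A.F ↔ v₃.1 ∈ A.F) ∨
      (v₂.1 ∈ A.F ↔ v₃.1 ∈ A.F) := by tauto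
  rcases hF with hF | hF | hF
  · exact .inl (classOf_eq_of_edgeG' h₁ h₂ hv₁ hv₂ hu₂ hF)
  · exact .inr (.inl (classOf_eq_of_edgeG' h₁ h₃ hv₁ hv₃ hu₃ hF))
  · exact .inr (.inr (classOf_eq_of_edgeG' h₂ h₃ hv₂ hv₃ (hu₂.symm.trans hu₃) hF))

theorem eq_of_classAt_zero {R C : Set (Q × ℕ)} (hR : ClassAt A w R 0) (hC : ClassAt A w C 0) :
    C = R := by
  obtain ⟨r, hr, hr0, rfl⟩ := hR
  obtain ⟨u, hu, hu0, rfl⟩ := hC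
  refine (classOf_eq_classOf_iff hr).2 ⟨hu0.trans hr0.symm, ?_⟩
  rw [profile_of_level_zero hu hu0, profile_of_level_zero hr hr0]

theorem descC_of_classAt [Finite Q] {R C : Set (Q × ℕ)} (hR : ClassAt A w R 0) {i : ℕ}
    (hC : ClassAt A w C i) : DescC A w R C := by
  induction i generalizing C with
  | zero => exact eq_of_classAt_zero hR hC ▸ .refl
  | succ i ih =>
    obtain ⟨v, hv, hv2, rfl⟩ := hC
    obtain ⟨u, huv⟩ := exists_edgeG' hv hv2
    have hu : ClassAt A w (classOf A w u) i := ⟨u, huv.1.1, by have := huv.1.2.1; omega, rfl⟩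
    exact .tail (ih hu) ⟨u, v, huv, hv, rfl, rfl⟩

variable (A w) in
theorem setOf_classAt_subset_range (i : ℕ) :
    {C | ClassAt A w C i} ⊆ Set.range fun q : Q => classOf A w (q, i) := by
  rintro C ⟨u, -, rfl, rfl⟩
  exact ⟨u.1, rfl⟩

theorem ncard_setOf_classAt_le [Finite Q] (i : ℕ) : {C | ClassAt A w C i}.ncard ≤ Nat.card Q :=
  calc {C | ClassAt A w C i}.ncard
      ≤ (Set.range fun q : Q => classOf A w (q, i)).ncard :=
        Set.ncard_le_ncard (setOf_classAt_subset_range A w i) (Set.finite_range _)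
    _ ≤ Nat.card Q := by rw [← Nat.card_coe_set_eq]; exact Finite.card_range_le _

end ProfileTree

theorem profile_tree_binary_bounded_width_general [Fintype Q]
    (A : NBW Alph Q) (w : ℕ → Alph) (n : ℕ) (hn : Fintype.card Q = n) :
    (∀ D i, ClassAt A w D (i + 1) → ∃! C, childC A w C D) ∧
    (∀ C D₁ D₂ D₃, childC A w C D₁ → childC A w C D₂ → childC A w C D₃ →
      D₁ = D₂ ∨ D₁ = D₃ ∨ D₂ = D₃) ∧
    (∀ R, ClassAt A w R 0 → ∀ C i, ClassAt A w C i → DescC A w R C) ∧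
    (∀ i, { C | ClassAt A w C i }.Finite ∧ { C | ClassAt A w C i }.ncard ≤ n) := by
  refine ⟨fun D i hD => existsUnique_childC hD, fun C D₁ D₂ D₃ => childC_eq_or_eq_or_eq,
    fun R hR C i hC => descC_of_classAt hR hC, fun i => ⟨?_, ?_⟩⟩
  · exact (Set.finite_range _).subset (setOf_classAt_subset_range A w i)
  · exact hn ▸ Nat.card_eq_fintype_card (α := Q) ▸ ncard_setOf_classAt_le i

/-- Theorem: the profile tree is a binary tree of width at most `n`.
Every class on a level `i+1` has exactly one parent, every class has at most two
children, all classes descend from the single level-0 class, and every level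
contains at most `n = |Q|` classes. -/
theorem profile_tree_binary_bounded_width [Fintype Alph] [Fintype Q]
    (A : NBW Alph Q) (w : ℕ → Alph) (n : ℕ) (hn : Fintype.card Q = n) :
    (∀ D i, ClassAt A w D (i + 1) → ∃! C, childC A w C D) ∧
    (∀ C D₁ D₂ D₃, childC A w C D₁ → childC A w C D₂ → childC A w C D₃ →
      D₁ = D₂ ∨ D₁ = D₃ ∨ D₂ = D₃) ∧
    (∀ R, ClassAt A w R 0 → ∀ C i, ClassAt A w C i → DescC A w R C) ∧
    (∀ i, { C | ClassAt A w C i }.Finite ∧ { C | ClassAt A w C i }.ncard ≤ n) :=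
  profile_tree_binary_bounded_width_general A w n hn
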